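/- Let (𝐬, r(𝐬)) ∈ 𝒮 with 𝐬 = ([i_1,j_1],…,[i_r,j_r]) and r(𝐬) = (1, r_1, …, r_k), and set 𝐬° = ([i_r,j_r],…,[i_1,j_1]). Then (𝐬°, r(𝐬°)) ∈ 𝒮, where r(𝐬°) = (1, r−r_{k−1}+1, …, r−r_1+1, r). Moreover 𝐬 is connected if and only if 𝐬° is connected, and if 𝐬¹ ∨ ⋯ ∨ 𝐬^ℓ is the prime decomposition of 𝐬 then the prime decomposition of 𝐬° is (𝐬^ℓ)° ∨ ⋯ ∨ (𝐬¹)°. -/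

import Mathlib

namespace AltSnakePaper

/-- `[i,j] ∈ 𝕀ₙ`: the interval condition `0 ≤ j - i ≤ n + 1`. -/
def InIn (n : ℕ) (i j : ℤ) : Prop := 0 ≤ j - i ∧ j - i ≤ (n : ℤ) + 1

/-- The intervals `[i1,j1]` and `[i2,j2]` overlap. -/
def Overlap (i1 j1 i2 j2 : ℤ) : Prop :=
  (i1 < i2 ∧ i2 ≤ j1 ∧ j1 < j2) ∨ (i2 < i1 ∧ i1 ≤ j2 ∧ j2 < j1)

/-- The pair `([i1,j1],[i2,j2])` is connected. -/
def ConnPair (n : ℕ) (i1 j1 i2 j2 : ℤ) : Prop :=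
  Overlap i1 j1 i2 j2 ∧ InIn n i1 j2 ∧ InIn n i2 j1

/-- The subtuple `𝐬(a,b)` (entries with indices `a+1, …, b`) lies in `S_→`. -/
def SRight (ii jj : ℕ → ℤ) (a b : ℕ) : Prop :=
  ∀ s, a + 1 ≤ s → s + 1 ≤ b → ii s < ii (s + 1) ∧ jj s < jj (s + 1)

/-- The subtuple `𝐬(a,b)` (entries with indices `a+1, …, b`) lies in `S_←`. -/
def SLeft (ii jj : ℕ → ℤ) (a b : ℕ) : Prop :=
  ∀ s, a + 1 ≤ s → s + 1 ≤ b → ii (s + 1) < ii s ∧ jj (s + 1) < jj s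

/-- `(𝐬, r(𝐬))` is an alternating snake, where `𝐬 = ([i_1,j_1],…,[i_r,j_r])`
(encoded by `ii jj : ℕ → ℤ`, entries indexed `1,…,r`) and
`r(𝐬) = (r_0, r_1, …, r_k)` (encoded by `rr : ℕ → ℕ`). -/
structure IsAltSnake (n r k : ℕ) (rr : ℕ → ℕ) (ii jj : ℕ → ℤ) : Prop where
  hr : 1 ≤ r
  hk : k ≤ r
  mem : ∀ s, 1 ≤ s → s ≤ r → InIn n (ii s) (jj s)
  distinct : ∀ s p, 1 ≤ s → s ≤ r → 1 ≤ p → p ≤ r → s ≠ p → ii s ≠ ii p ∨ jj s ≠ jj p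
  rr0 : rr 0 = 1
  rrk : rr k = r
  rrmono : ∀ m, m < k → rr m < rr (m + 1)
  mono : ∀ m, 1 ≤ m → m ≤ k →
      SRight ii jj (rr (m - 1) - 1) (rr m) ∨ SLeft ii jj (rr (m - 1) - 1) (rr m)
  alt : ∀ m, 1 ≤ m → m < k →
      (SRight ii jj (rr (m - 1) - 1) (rr m) ↔ SLeft ii jj (rr m - 1) (rr (m + 1)))
  nonoverlap : ∀ m s t, 1 ≤ m → m < k → 1 ≤ s → s < rr m → rr m < t → t ≤ r →
      ¬ Overlap (ii s) (jj s) (ii t) (jj t)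

/-- The subtuple `𝐬(a,b)` is connected: all consecutive pairs are connected. -/
def SegConnected (n : ℕ) (ii jj : ℕ → ℤ) (a b : ℕ) : Prop :=
  ∀ s, a + 1 ≤ s → s + 1 ≤ b → ConnPair n (ii s) (jj s) (ii (s + 1)) (jj (s + 1))

/-- The subtuple `𝐬(a,b)` (with its induced r-vector, whose internal break points
are the `rr m` with `a + 1 < rr m < b`) is prime. -/
def SegPrime (n k : ℕ) (rr : ℕ → ℕ) (ii jj : ℕ → ℤ) (a b : ℕ) : Prop :=
  SegConnected n ii jj a b ∧
    ∀ m, 1 ≤ m → m < k → a + 1 < rr m → rr m < b →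
      ii (rr m - 1) ≠ ii (rr m + 1) ∧ jj (rr m - 1) ≠ jj (rr m + 1)

/-- The subtuple `𝐬(a,b)` (with its induced r-vector) is stable. -/
def SegStable (k : ℕ) (rr : ℕ → ℕ) (ii jj : ℕ → ℤ) (a b : ℕ) : Prop :=
  ∀ m, 1 ≤ m → m < k → a + 1 < rr m → rr m < b →
    (ii (rr m + 1) < ii (rr m - 1) → jj (rr m + 1) < ii (rr m - 1)) ∧
    (jj (rr m - 1) < jj (rr m + 1) → jj (rr m - 1) < ii (rr m + 1))

/-- The alternating snake is stable. -/
def Stable (k : ℕ) (rr : ℕ → ℕ) (ii jj : ℕ → ℤ) : Prop :=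
  ∀ m, 1 ≤ m → m < k →
    (ii (rr m + 1) < ii (rr m - 1) → jj (rr m + 1) < ii (rr m - 1)) ∧
    (jj (rr m - 1) < jj (rr m + 1) → jj (rr m - 1) < ii (rr m + 1))

/-- The boundary condition allowing a cut of the snake at `p = rr m - ε`:
`a_{r_m-1} = a_{r_m+1}` for some `a ∈ {i, j}`, with `ε ∈ {0,1}` chosen so that, `b`
denoting the other member of `{i,j}`, one has `b_{r_m−1+2ε} < b_{r_m+1−2ε}` if
`𝐬(r_m−2, r_m) ∈ S_←` and `b_{r_m+1−2ε} < b_{r_m−1+2ε}` if `𝐬(r_m−2, r_m) ∈ S_→`. -/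
def BoundaryCond (k : ℕ) (rr : ℕ → ℕ) (ii jj : ℕ → ℤ) (m ε : ℕ) : Prop :=
  (ii (rr m - 1) = ii (rr m + 1) ∧
    (SLeft ii jj (rr m - 2) (rr m) → jj (rr m - 1 + 2 * ε) < jj (rr m + 1 - 2 * ε)) ∧
    (SRight ii jj (rr m - 2) (rr m) → jj (rr m + 1 - 2 * ε) < jj (rr m - 1 + 2 * ε))) ∨
  (jj (rr m - 1) = jj (rr m + 1) ∧
    (SLeft ii jj (rr m - 2) (rr m) → ii (rr m - 1 + 2 * ε) < ii (rr m + 1 - 2 * ε)) ∧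
    (SRight ii jj (rr m - 2) (rr m) → ii (rr m + 1 - 2 * ε) < ii (rr m - 1 + 2 * ε)))

/-- `p` is an admissible cut point for the prime decomposition. -/
def CutAt (n r k : ℕ) (rr : ℕ → ℕ) (ii jj : ℕ → ℤ) (p : ℕ) : Prop :=
  p = r ∨
  ¬ ConnPair n (ii p) (jj p) (ii (p + 1)) (jj (p + 1)) ∨
  ∃ m ε, 1 ≤ m ∧ m < k ∧ ε ≤ 1 ∧ p = rr m - ε ∧ BoundaryCond k rr ii jj m ε

/-- `0 = c 0 < c 1 < ⋯ < c L = r` are the cut points of a prime decomposition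
of the snake, the prime factors being the segments `𝐬(c t, c (t+1))`. -/
def IsPrimeDecomp (n r k : ℕ) (rr : ℕ → ℕ) (ii jj : ℕ → ℤ) (c : ℕ → ℕ) (L : ℕ) : Prop :=
  1 ≤ L ∧ c 0 = 0 ∧ c L = r ∧ (∀ t, t < L → c t < c (t + 1)) ∧
  (∀ t, t < L → SegPrime n k rr ii jj (c t) (c (t + 1))) ∧
  (∀ t, 1 ≤ t → t ≤ L → CutAt n r k rr ii jj (c t))

/-- The segment `𝐬(a,b)` is contained in a prime factor of `𝐬`. -/
def ContainedInPF (n r k : ℕ) (rr : ℕ → ℕ) (ii jj : ℕ → ℤ) (a b : ℕ) : Prop :=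
  ∃ c L t, IsPrimeDecomp n r k rr ii jj c L ∧ t < L ∧ c t ≤ a ∧ b ≤ c (t + 1)


/-!
Reversal `s ↦ r + 1 - s` turns strictly increasing runs into strictly decreasing ones and
back, and maps the break point `r_m` to `r + 1 - r_m`, so the alternation, the nonoverlap
condition and connectedness (which is symmetric in the two intervals) all survive. The only
delicate point is the cut condition of the prime decomposition: a cut at `r_m - ε` becomes a cut
at `r + 1 - r_m - (1 - ε)`, and the side conditions of the reversed cut refer to the direction of
the run *after* `r_m`, which by alternation is opposite to the direction of the run before it.
-/

theorem overlap_comm {i₁ j₁ i₂ j₂ : ℤ} : Overlap i₁ j₁ i₂ j₂ ↔ Overlap i₂ j₂ i₁ j₁ :=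
  or_comm

theorem connPair_comm {n : ℕ} {i₁ j₁ i₂ j₂ : ℤ} :
    ConnPair n i₁ j₁ i₂ j₂ ↔ ConnPair n i₂ j₂ i₁ j₁ := by
  unfold ConnPair
  rw [overlap_comm]
  tauto

/-- The hypotheses say that `s ↦ r + 1 - s` maps the index range `(a, b]` onto `(a', b']`. -/
theorem forall_consecutive_rev_iff {r a b a' b' : ℕ} (ha : a + b' = r) (hb : b + a' = r)
    (P : ℕ → ℕ → Prop) :
    (∀ s, a + 1 ≤ s → s + 1 ≤ b → P (r + 1 - s) (r + 1 - (s + 1))) ↔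
      ∀ s, a' + 1 ≤ s → s + 1 ≤ b' → P (s + 1) s := by
  constructor
  · intro h s hs hs'
    have := h (r - s) (by omega) (by omega)
    rwa [show r + 1 - (r - s) = s + 1 by omega, show r + 1 - (r - s + 1) = s by omega] at this
  · intro h s hs hs'
    have := h (r - s) (by omega) (by omega)
    rwa [show r - s + 1 = r + 1 - s by omega, ← show r + 1 - (s + 1) = r - s by omega] at this

section Reversal

variable {n r a b a' b' : ℕ} {ii jj : ℕ → ℤ}

theorem sRight_rev_iff (ha : a + b' = r) (hb : b + a' = r) :
    SRight (fun s => ii (r + 1 - s)) (fun s => jj (r + 1 - s)) a b ↔ SLeft ii jj a' b' :=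
  forall_consecutive_rev_iff ha hb fun x y => ii x < ii y ∧ jj x < jj y

theorem sLeft_rev_iff (ha : a + b' = r) (hb : b + a' = r) :
    SLeft (fun s => ii (r + 1 - s)) (fun s => jj (r + 1 - s)) a b ↔ SRight ii jj a' b' :=
  forall_consecutive_rev_iff ha hb fun x y => ii y < ii x ∧ jj y < jj x

theorem segConnected_rev_iff (ha : a + b' = r) (hb : b + a' = r) :
    SegConnected n (fun s => ii (r + 1 - s)) (fun s => jj (r + 1 - s)) a b ↔
      SegConnected n ii jj a' b' :=
  (forall_consecutive_rev_iff ha hb fun x y => ConnPair n (ii x) (jj x) (ii y) (jj y)).trans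
    (forall_congr' fun _ => imp_congr_right fun _ => imp_congr_right fun _ => connPair_comm)

end Reversal

section Runs

variable {ii jj : ℕ → ℤ} {a b a' b' : ℕ}

theorem SRight.mono (h : SRight ii jj a b) (ha : a ≤ a') (hb : b' ≤ b) : SRight ii jj a' b' :=
  fun s hs hs' => h s (by omega) (by omega)

theorem SLeft.mono (h : SLeft ii jj a b) (ha : a ≤ a') (hb : b' ≤ b) : SLeft ii jj a' b' :=
  fun s hs hs' => h s (by omega) (by omega)

theorem SRight.not_sLeft (h : SRight ii jj a b) (hab : a + 2 ≤ b) : ¬ SLeft ii jj a b :=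
  fun h' => lt_asymm (h (a + 1) le_rfl hab).1 (h' (a + 1) le_rfl hab).1

end Runs

namespace IsAltSnake

variable {n r k : ℕ} {rr : ℕ → ℕ} {ii jj : ℕ → ℤ} {m : ℕ}

theorem rr_strictMonoOn (h : IsAltSnake n r k rr ii jj) : StrictMonoOn rr (Set.Iic k) :=
  strictMonoOn_Iic_of_lt_succ h.rrmono

theorem one_le_rr (h : IsAltSnake n r k rr ii jj) (hm : m ≤ k) : 1 ≤ rr m :=
  h.rr0 ▸ h.rr_strictMonoOn.monotoneOn (Set.mem_Iic.2 (Nat.zero_le k)) hm (Nat.zero_le m)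

theorem rr_le (h : IsAltSnake n r k rr ii jj) (hm : m ≤ k) : rr m ≤ r :=
  h.rrk ▸ h.rr_strictMonoOn.monotoneOn hm (Set.mem_Iic.2 le_rfl) hm

theorem two_le_rr (h : IsAltSnake n r k rr ii jj) (hm : 1 ≤ m) (hmk : m ≤ k) : 2 ≤ rr m := by
  have := h.rr_strictMonoOn (Set.mem_Iic.2 (Nat.zero_le k)) hmk (show 0 < m by omega)
  rw [h.rr0] at this
  omega

theorem rr_lt (h : IsAltSnake n r k rr ii jj) (hmk : m < k) : rr m < r :=
  h.rrk ▸ h.rr_strictMonoOn hmk.le (Set.mem_Iic.2 le_rfl) hmk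

theorem rr_pred_lt (h : IsAltSnake n r k rr ii jj) (hm : 1 ≤ m) (hmk : m ≤ k) :
    rr (m - 1) < rr m :=
  h.rr_strictMonoOn (Set.mem_Iic.2 (by omega)) hmk (by omega)

theorem mono_succ (h : IsAltSnake n r k rr ii jj) (hmk : m < k) :
    SRight ii jj (rr m - 1) (rr (m + 1)) ∨ SLeft ii jj (rr m - 1) (rr (m + 1)) := by
  simpa using h.mono (m + 1) (by omega) hmk

theorem sLeft_before_of_sRight_after (h : IsAltSnake n r k rr ii jj) (hm : 1 ≤ m) (hmk : m < k)
    (hup : SRight ii jj (rr m - 1) (rr m + 1)) : SLeft ii jj (rr m - 2) (rr m) := by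
  have hnext : ¬ SLeft ii jj (rr m - 1) (rr (m + 1)) := fun hl =>
    hup.not_sLeft (by have := h.two_le_rr hm hmk.le; omega)
      (hl.mono le_rfl (h.rrmono m hmk))
  have hlt := h.rr_pred_lt hm hmk.le
  rcases h.mono m hm hmk.le with hr | hl
  · exact absurd ((h.alt m hm hmk).1 hr) hnext
  · exact hl.mono (by omega) le_rfl

theorem sRight_before_of_sLeft_after (h : IsAltSnake n r k rr ii jj) (hm : 1 ≤ m) (hmk : m < k)
    (hdown : SLeft ii jj (rr m - 1) (rr m + 1)) : SRight ii jj (rr m - 2) (rr m) := by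
  have hlt := h.rr_pred_lt hm hmk.le
  rcases h.mono_succ hmk with hr | hl
  · exact absurd hdown
      ((hr.mono le_rfl (h.rrmono m hmk)).not_sLeft (by have := h.two_le_rr hm hmk.le; omega))
  · exact ((h.alt m hm hmk).2 hl).mono (by omega) le_rfl

theorem boundaryCond_rev (h : IsAltSnake n r k rr ii jj) {ε : ℕ} (hm : 1 ≤ m) (hmk : m < k)
    (hε : ε ≤ 1) (hbc : BoundaryCond k rr ii jj m ε) :
    BoundaryCond k (fun t => r + 1 - rr (k - t)) (fun s => ii (r + 1 - s))
      (fun s => jj (r + 1 - s)) (k - m) (1 - ε) := by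
  have h2 := h.two_le_rr hm hmk.le
  have hlt := h.rr_lt hmk
  have hleft : SLeft (fun s => ii (r + 1 - s)) (fun s => jj (r + 1 - s))
      (r + 1 - rr m - 2) (r + 1 - rr m) → SLeft ii jj (rr m - 2) (rr m) := fun hs =>
    h.sLeft_before_of_sRight_after hm hmk ((sLeft_rev_iff (by omega) (by omega)).1 hs)
  have hright : SRight (fun s => ii (r + 1 - s)) (fun s => jj (r + 1 - s))
      (r + 1 - rr m - 2) (r + 1 - rr m) → SRight ii jj (rr m - 2) (rr m) := fun hs =>
    h.sRight_before_of_sLeft_after hm hmk ((sRight_rev_iff (by omega) (by omega)).1 hs)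
  unfold BoundaryCond
  simp only [show k - (k - m) = m by omega, show r + 1 - (r + 1 - rr m - 1) = rr m + 1 by omega,
    show r + 1 - (r + 1 - rr m + 1) = rr m - 1 by omega,
    show r + 1 - (r + 1 - rr m - 1 + 2 * (1 - ε)) = rr m - 1 + 2 * ε by omega,
    show r + 1 - (r + 1 - rr m + 1 - 2 * (1 - ε)) = rr m + 1 - 2 * ε by omega]
  rcases hbc with ⟨heq, hsl, hsr⟩ | ⟨heq, hsl, hsr⟩
  · exact Or.inl ⟨heq.symm, hsl ∘ hleft, hsr ∘ hright⟩
  · exact Or.inr ⟨heq.symm, hsl ∘ hleft, hsr ∘ hright⟩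

theorem sRight_rev_block_iff (h : IsAltSnake n r k rr ii jj) (hm : 1 ≤ m) (hmk : m ≤ k) :
    SRight (fun s => ii (r + 1 - s)) (fun s => jj (r + 1 - s))
        (r + 1 - rr (k - (m - 1)) - 1) (r + 1 - rr (k - m)) ↔
      SLeft ii jj (rr (k - m) - 1) (rr (k - m + 1)) := by
  have := h.one_le_rr (m := k - m) (by omega)
  have := h.rr_le (m := k - m) (by omega)
  have := h.rr_le (m := k - m + 1) (by omega)
  rw [show k - (m - 1) = k - m + 1 by omega]
  exact sRight_rev_iff (by omega) (by omega)

theorem sLeft_rev_block_iff (h : IsAltSnake n r k rr ii jj) (hm : 1 ≤ m) (hmk : m ≤ k) :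
    SLeft (fun s => ii (r + 1 - s)) (fun s => jj (r + 1 - s))
        (r + 1 - rr (k - (m - 1)) - 1) (r + 1 - rr (k - m)) ↔
      SRight ii jj (rr (k - m) - 1) (rr (k - m + 1)) := by
  have := h.one_le_rr (m := k - m) (by omega)
  have := h.rr_le (m := k - m) (by omega)
  have := h.rr_le (m := k - m + 1) (by omega)
  rw [show k - (m - 1) = k - m + 1 by omega]
  exact sLeft_rev_iff (by omega) (by omega)

protected theorem rev (h : IsAltSnake n r k rr ii jj) :
    IsAltSnake n r k (fun t => r + 1 - rr (k - t))
      (fun s => ii (r + 1 - s)) (fun s => jj (r + 1 - s)) where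
  hr := h.hr
  hk := h.hk
  mem s hs hsr := h.mem (r + 1 - s) (by omega) (by omega)
  distinct s p hs hsr hp hpr hsp :=
    h.distinct (r + 1 - s) (r + 1 - p) (by omega) (by omega) (by omega) (by omega) (by omega)
  rr0 := by simp [h.rrk]
  rrk := by simp [h.rr0]
  rrmono m hmk := by
    have := h.rr_le (m := k - m) (Nat.sub_le k m)
    have := h.rrmono (k - (m + 1)) (by omega)
    rw [show k - (m + 1) + 1 = k - m by omega] at this
    show r + 1 - rr (k - m) < r + 1 - rr (k - (m + 1))
    omega
  mono m hm hmk := by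
    rw [h.sRight_rev_block_iff hm hmk, h.sLeft_rev_block_iff hm hmk]
    simpa [or_comm] using h.mono (k - m + 1) (by omega) (by omega)
  alt m hm hmk := by
    have := h.one_le_rr (m := k - (m + 1)) (by omega)
    have := h.rr_le (m := k - (m + 1)) (by omega)
    have := h.rr_le (m := k - m) (by omega)
    rw [h.sRight_rev_block_iff hm hmk.le, sLeft_rev_iff (a' := rr (k - (m + 1)) - 1)
      (b' := rr (k - m)) (by omega) (by omega)]
    have key := h.alt (k - m) (by omega) (by omega)
    rw [show k - m - 1 = k - (m + 1) by omega] at key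
    exact key.symm
  nonoverlap m s t hm hmk hs hst hts ht hov := by
    have := h.one_le_rr (m := k - m) (by omega)
    have := h.rr_le (m := k - m) (by omega)
    exact h.nonoverlap (k - m) (r + 1 - t) (r + 1 - s) (by omega) (by omega) (by omega)
      (by omega) (by omega) (by omega) (overlap_comm.1 hov)

theorem segPrime_rev (h : IsAltSnake n r k rr ii jj) {a b : ℕ} (ha : a ≤ r) (hb : b ≤ r)
    (hp : SegPrime n k rr ii jj a b) :
    SegPrime n k (fun t => r + 1 - rr (k - t)) (fun s => ii (r + 1 - s))
      (fun s => jj (r + 1 - s)) (r - b) (r - a) := by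
  refine ⟨(segConnected_rev_iff (by omega) (by omega)).2 hp.1, fun m hm hmk hlo hhi => ?_⟩
  simp only at hlo hhi ⊢
  have := h.one_le_rr (m := k - m) (by omega)
  have := h.rr_le (m := k - m) (by omega)
  obtain ⟨hi, hj⟩ := hp.2 (k - m) (by omega) (by omega) (by omega) (by omega)
  rw [show r + 1 - (r + 1 - rr (k - m) - 1) = rr (k - m) + 1 by omega,
    show r + 1 - (r + 1 - rr (k - m) + 1) = rr (k - m) - 1 by omega]
  exact ⟨hi.symm, hj.symm⟩

theorem cutAt_rev (h : IsAltSnake n r k rr ii jj) {p : ℕ} (hpr : p < r)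
    (hc : CutAt n r k rr ii jj p) :
    CutAt n r k (fun t => r + 1 - rr (k - t)) (fun s => ii (r + 1 - s))
      (fun s => jj (r + 1 - s)) (r - p) := by
  rcases hc with rfl | hnc | ⟨m, ε, hm, hmk, hε, rfl, hbc⟩
  · omega
  · refine Or.inr (Or.inl fun hcp => hnc (connPair_comm.1 ?_))
    simp only at hcp
    rwa [show r + 1 - (r - p) = p + 1 by omega, show r + 1 - (r - p + 1) = p by omega] at hcp
  · refine Or.inr (Or.inr ⟨k - m, 1 - ε, by omega, by omega, by omega, ?_,
      h.boundaryCond_rev hm hmk hε hbc⟩)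
    have := h.two_le_rr hm hmk.le
    simp only [show k - (k - m) = m by omega]
    omega

theorem isPrimeDecomp_rev (h : IsAltSnake n r k rr ii jj) {c : ℕ → ℕ} {L : ℕ}
    (hc : IsPrimeDecomp n r k rr ii jj c L) :
    IsPrimeDecomp n r k (fun t => r + 1 - rr (k - t)) (fun s => ii (r + 1 - s))
      (fun s => jj (r + 1 - s)) (fun t => r - c (L - t)) L := by
  obtain ⟨hL, hc0, hcL, hcmono, hprime, hcut⟩ := hc
  have hcstrict : StrictMonoOn c (Set.Iic L) := strictMonoOn_Iic_of_lt_succ hcmono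
  have hcle : ∀ t, c (L - t) ≤ r := fun t =>
    hcL ▸ hcstrict.monotoneOn (Set.mem_Iic.2 (Nat.sub_le L t)) (Set.mem_Iic.2 le_rfl)
      (Nat.sub_le L t)
  refine ⟨hL, by simp [hcL], by simp [hc0], fun t ht => ?_, fun t ht => ?_, fun t ht htL => ?_⟩
  · have := hcle t
    have := hcmono (L - (t + 1)) (by omega)
    rw [show L - (t + 1) + 1 = L - t by omega] at this
    show r - c (L - t) < r - c (L - (t + 1))
    omega
  · have := hprime (L - (t + 1)) (by omega)
    rw [show L - (t + 1) + 1 = L - t by omega] at this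
    exact h.segPrime_rev (hcle (t + 1)) (hcle t) this
  · rcases htL.eq_or_lt with rfl | htL
    · exact Or.inl (by simp [hc0])
    · refine h.cutAt_rev ?_ (hcut (L - t) (by omega) (by omega))
      exact hcL ▸ hcstrict (Set.mem_Iic.2 (Nat.sub_le L t)) (Set.mem_Iic.2 le_rfl) (by omega)

end IsAltSnake

theorem stmt_3_general (n r k : ℕ) (rr : ℕ → ℕ) (ii jj : ℕ → ℤ)
    (h : IsAltSnake n r k rr ii jj) :
    IsAltSnake n r k (fun t => r + 1 - rr (k - t))
      (fun s => ii (r + 1 - s)) (fun s => jj (r + 1 - s)) ∧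
    (SegConnected n ii jj 0 r ↔
      SegConnected n (fun s => ii (r + 1 - s)) (fun s => jj (r + 1 - s)) 0 r) ∧
    (∀ c L, IsPrimeDecomp n r k rr ii jj c L →
      IsPrimeDecomp n r k (fun t => r + 1 - rr (k - t))
        (fun s => ii (r + 1 - s)) (fun s => jj (r + 1 - s))
        (fun t => r - c (L - t)) L) :=
  ⟨h.rev, (segConnected_rev_iff (zero_add r) (add_zero r)).symm,
    fun _ _ hc => h.isPrimeDecomp_rev hc⟩

/-- Lemma (elemalt (iii)): the reversal `𝐬° = ([i_r,j_r],…,[i_1,j_1])` is an alternating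
snake with r-vector `(1, r−r_{k−1}+1, …, r−r_1+1, r)`, `𝐬` is connected iff `𝐬°` is, and
the prime decomposition of `𝐬°` is the reversal of the prime decomposition of `𝐬`. -/
theorem stmt_3 (n r k : ℕ) (hn : 1 ≤ n) (rr : ℕ → ℕ) (ii jj : ℕ → ℤ)
    (h : IsAltSnake n r k rr ii jj) :
    IsAltSnake n r k (fun t => r + 1 - rr (k - t))
      (fun s => ii (r + 1 - s)) (fun s => jj (r + 1 - s)) ∧
    (SegConnected n ii jj 0 r ↔
      SegConnected n (fun s => ii (r + 1 - s)) (fun s => jj (r + 1 - s)) 0 r) ∧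
    (∀ c L, IsPrimeDecomp n r k rr ii jj c L →
      IsPrimeDecomp n r k (fun t => r + 1 - rr (k - t))
        (fun s => ii (r + 1 - s)) (fun s => jj (r + 1 - s))
        (fun t => r - c (L - t)) L) :=
  stmt_3_general n r k rr ii jj h

end AltSnakePaper
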